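/- Fix T>0, λ>0, γ≥0, σ≥0, αᵢ≥0, a continuous function b:[0,T]→ℝ, y∈ℝ, and C² functions X₁,…,Xₙ:[0,T]→ℝ. Then the functional Y ↦ ∫₀ᵀ [ Y(t)(b(t) + γ·Σ_{j≠i} Ẋⱼ(t)) − (αᵢσ²/2)·Y(t)² − λ·Ẏ(t)·(Σ_{j≠i} Ẋⱼ(t) + Ẏ(t)) ] dt has a unique maximizer Y* over 𝒳(y,T); moreover Y* is C² and is the unique C² solution of the two-point boundary value problem αᵢσ²Y(t) − 2λŸ(t) = b(t) + γ·Σ_{j≠i} Ẋⱼ(t) + λ·Σ_{j≠i} Ẍⱼ(t), Y(0)=y, Y(T)=0. -/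

import Mathlib

open Set MeasureTheory
open intervalIntegral

/-- The class 𝒳(y,T): `Y` is absolutely continuous on `[0,T]` with
(square-integrable) derivative `D`, and satisfies `Y(0) = y` (implied by the
integral representation) and `Y(T) = 0`. -/
def Admissible (T y : ℝ) (Y D : ℝ → ℝ) : Prop :=
  Measurable D ∧
  IntervalIntegrable (fun t => (D t) ^ 2) volume 0 T ∧
  (∀ t ∈ Icc (0 : ℝ) T, Y t = y + ∫ s in (0 : ℝ)..t, D s) ∧
  Y T = 0

/-- Player `i`'s objective functional
`∫₀ᵀ [Y(t)(b(t)+γS(t)) − (αᵢσ²/2)Y(t)² − λẎ(t)(S(t)+Ẏ(t))] dt`,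
where `S = Σ_{j≠i} Ẋⱼ`. -/
noncomputable def objective (T lam gam sig αi : ℝ) (b S Y D : ℝ → ℝ) : ℝ :=
  ∫ t in (0 : ℝ)..T,
    (Y t * (b t + gam * S t) - αi * sig ^ 2 / 2 * (Y t) ^ 2
      - lam * D t * (S t + D t))

/-- `(Y, D)` maximizes the objective over `𝒳(y,T)`. -/
def IsMaximizer (T lam gam sig αi : ℝ) (b S : ℝ → ℝ) (y : ℝ)
    (Y D : ℝ → ℝ) : Prop :=
  Admissible T y Y D ∧
  ∀ Z E : ℝ → ℝ, Admissible T y Z E →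
    objective T lam gam sig αi b S Z E ≤ objective T lam gam sig αi b S Y D

lemma hasDerivAt_primitive {F : ℝ → ℝ} (hF : Continuous F) (a t : ℝ) :
    HasDerivAt (fun u => ∫ s in a..u, F s) (F t) t :=
  (integral_hasStrictDerivAt_right (hF.intervalIntegrable a t)
    (hF.stronglyMeasurable.stronglyMeasurableAtFilter) hF.continuousAt).hasDerivAt

lemma contDiff_two_of {Y Y1 Y2 : ℝ → ℝ} (h1 : ∀ t, HasDerivAt Y (Y1 t) t)
    (h2 : ∀ t, HasDerivAt Y1 (Y2 t) t) (hc : Continuous Y2) :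
    ContDiff ℝ 2 Y ∧ deriv Y = Y1 ∧ deriv (deriv Y) = Y2 := by
  have e1 : deriv Y = Y1 := funext fun t => (h1 t).deriv
  have e2 : deriv Y1 = Y2 := funext fun t => (h2 t).deriv
  refine ⟨?_, e1, by rw [e1, e2]⟩
  rw [show (2 : WithTop ℕ∞) = 1 + 1 from rfl, contDiff_succ_iff_deriv]
  refine ⟨fun t => (h1 t).differentiableAt, by simp, ?_⟩
  rw [e1, contDiff_one_iff_deriv, e2]
  exact ⟨fun t => (h2 t).differentiableAt, hc⟩

/-- particular and homogeneous solutions of Y'' = c Y + g -/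
lemma exists_parts (c : ℝ) (hc : 0 ≤ c) (T : ℝ) (hT : 0 < T) (g : ℝ → ℝ) (hg : Continuous g) :
    ∃ Yp h1 h2 : ℝ → ℝ, ContDiff ℝ 2 Yp ∧ ContDiff ℝ 2 h1 ∧ ContDiff ℝ 2 h2 ∧
      Yp 0 = 0 ∧ h1 0 = 1 ∧ h2 0 = 0 ∧ h2 T ≠ 0 ∧
      (∀ t, deriv (deriv Yp) t = c * Yp t + g t) ∧
      (∀ t, deriv (deriv h1) t = c * h1 t) ∧
      (∀ t, deriv (deriv h2) t = c * h2 t) := by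
  rcases eq_or_lt_of_le hc with hc0 | hcpos
  · -- c = 0
    set Y1 : ℝ → ℝ := fun t => ∫ u in (0:ℝ)..t, g u with hY1def
    have hY1d : ∀ t, HasDerivAt Y1 (g t) t := fun t => hasDerivAt_primitive hg 0 t
    have hY1c : Continuous Y1 :=
      continuous_iff_continuousAt.2 fun t => (hY1d t).continuousAt
    set Yp : ℝ → ℝ := fun t => ∫ s in (0:ℝ)..t, Y1 s with hYpdef
    have hYpd : ∀ t, HasDerivAt Yp (Y1 t) t := fun t => hasDerivAt_primitive hY1c 0 t
    obtain ⟨hcd, -, hdd⟩ := contDiff_two_of hYpd hY1d hg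
    have hid : ContDiff ℝ 2 (id : ℝ → ℝ) := contDiff_id
    refine ⟨Yp, fun _ => 1, id, hcd, contDiff_const, contDiff_id, by simp [hYpdef],
      rfl, rfl, by simpa using hT.ne', ?_, ?_, ?_⟩
    · intro t; rw [hdd]; rw [← hc0]; ring
    · intro t; simp [← hc0]
    · intro t
      have : deriv (id : ℝ → ℝ) = fun _ => (1:ℝ) := funext fun t => deriv_id t
      rw [this]; simp [← hc0]
  · -- c > 0
    set m := Real.sqrt c with hm
    have hmpos : 0 < m := Real.sqrt_pos.2 hcpos
    have hm2 : m ^ 2 = c := Real.sq_sqrt hc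
    have hsinh : ∀ t : ℝ, HasDerivAt (fun u => Real.sinh (m * u)) (m * Real.cosh (m * t)) t := by
      intro t
      have := ((hasDerivAt_id t).const_mul m).sinh
      simpa [mul_comm] using this
    have hcosh : ∀ t : ℝ, HasDerivAt (fun u => Real.cosh (m * u)) (m * Real.sinh (m * t)) t := by
      intro t
      have := ((hasDerivAt_id t).const_mul m).cosh
      simpa [mul_comm] using this
    set P : ℝ → ℝ := fun t => ∫ s in (0:ℝ)..t, Real.cosh (m * s) * g s with hPdef
    set Q : ℝ → ℝ := fun t => ∫ s in (0:ℝ)..t, Real.sinh (m * s) * g s with hQdef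
    have hgP : Continuous fun s => Real.cosh (m * s) * g s := by fun_prop
    have hgQ : Continuous fun s => Real.sinh (m * s) * g s := by fun_prop
    have hPd : ∀ t, HasDerivAt P (Real.cosh (m * t) * g t) t := fun t => hasDerivAt_primitive hgP 0 t
    have hQd : ∀ t, HasDerivAt Q (Real.sinh (m * t) * g t) t := fun t => hasDerivAt_primitive hgQ 0 t
    have hPc : Continuous P := continuous_iff_continuousAt.2 fun t => (hPd t).continuousAt
    have hQc : Continuous Q := continuous_iff_continuousAt.2 fun t => (hQd t).continuousAt
    set Yp : ℝ → ℝ := fun t => (1/m) * (Real.sinh (m*t) * P t - Real.cosh (m*t) * Q t) with hYp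
    set Yp1 : ℝ → ℝ := fun t => Real.cosh (m*t) * P t - Real.sinh (m*t) * Q t with hYp1
    set Yp2 : ℝ → ℝ := fun t => c * Yp t + g t with hYp2
    have hd1 : ∀ t, HasDerivAt Yp (Yp1 t) t := by
      intro t
      have h := ((((hsinh t).mul (hPd t)).sub ((hcosh t).mul (hQd t))).const_mul (1/m))
      refine h.congr_deriv (Eq.symm ?_)
      simp only [hYp1]
      field_simp
      ring
    have hd2 : ∀ t, HasDerivAt Yp1 (Yp2 t) t := by
      intro t
      have h := (((hcosh t).mul (hPd t)).sub ((hsinh t).mul (hQd t)))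
      refine h.congr_deriv (Eq.symm ?_)
      have hid : Real.cosh (m*t) ^ 2 - Real.sinh (m*t) ^ 2 = 1 := Real.cosh_sq_sub_sinh_sq (m*t)
      simp only [hYp2, hYp]
      have : c * ((1/m) * (Real.sinh (m*t) * P t - Real.cosh (m*t) * Q t))
          = m * (Real.sinh (m*t) * P t - Real.cosh (m*t) * Q t) := by
        rw [← hm2]; field_simp
      rw [this]
      linear_combination (-(g t)) * hid
    have hYp2c : Continuous Yp2 := by
      have : Continuous Yp := continuous_iff_continuousAt.2 fun t => (hd1 t).continuousAt
      fun_prop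
    obtain ⟨hcd, -, hdd⟩ := contDiff_two_of hd1 hd2 hYp2c
    -- homogeneous solutions
    have hch : ∀ t, HasDerivAt (fun u => m * Real.sinh (m*u)) (c * Real.cosh (m*t)) t := by
      intro t
      have := (hsinh t).const_mul m
      refine this.congr_deriv (Eq.symm ?_)
      rw [← hm2]; ring
    have hsh : ∀ t, HasDerivAt (fun u => m * Real.cosh (m*u)) (c * Real.sinh (m*t)) t := by
      intro t
      have := (hcosh t).const_mul m
      refine this.congr_deriv (Eq.symm ?_)
      rw [← hm2]; ring
    obtain ⟨h1cd, -, h1dd⟩ := contDiff_two_of hcosh hch (by fun_prop)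
    obtain ⟨h2cd, -, h2dd⟩ := contDiff_two_of hsinh hsh (by fun_prop)
    refine ⟨Yp, fun t => Real.cosh (m*t), fun t => Real.sinh (m*t), hcd, h1cd, h2cd,
      by simp [hYp, hQdef], by simp, by simp, ?_, ?_, ?_, ?_⟩
    · simpa [Real.sinh_eq_zero] using (by positivity : 0 < m * T).ne'
    · intro t; rw [hdd]
    · intro t; rw [h1dd]
    · intro t; rw [h2dd]

lemma deriv2_lin {f g h : ℝ → ℝ} (A B : ℝ) (hf : ContDiff ℝ 2 f) (hg : ContDiff ℝ 2 g)
    (hh : ContDiff ℝ 2 h) :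
    ContDiff ℝ 2 (fun t => A * f t + B * g t + h t) ∧
    (∀ t, deriv (deriv fun u => A * f u + B * g u + h u) t
      = A * deriv (deriv f) t + B * deriv (deriv g) t + deriv (deriv h) t) := by
  have hdf : Differentiable ℝ f := hf.differentiable two_ne_zero
  have hdg : Differentiable ℝ g := hg.differentiable two_ne_zero
  have hdh : Differentiable ℝ h := hh.differentiable two_ne_zero
  rw [show (2 : WithTop ℕ∞) = 1 + 1 from rfl] at hf hg hh
  have hf' : Differentiable ℝ (deriv f) :=
    ((contDiff_succ_iff_deriv.mp hf).2.2).differentiable one_ne_zero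
  have hg' : Differentiable ℝ (deriv g) :=
    ((contDiff_succ_iff_deriv.mp hg).2.2).differentiable one_ne_zero
  have hh' : Differentiable ℝ (deriv h) :=
    ((contDiff_succ_iff_deriv.mp hh).2.2).differentiable one_ne_zero
  have e1 : deriv (fun u => A * f u + B * g u + h u)
      = fun t => A * deriv f t + B * deriv g t + deriv h t := by
    funext t
    exact ((((hdf t).hasDerivAt.const_mul A).add ((hdg t).hasDerivAt.const_mul B)).add
      (hdh t).hasDerivAt).deriv
  constructor
  · rw [show (1 : WithTop ℕ∞) + 1 = 2 from rfl] at hf hg hh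
    exact ((contDiff_const.mul hf).add (contDiff_const.mul hg)).add hh
  · intro t
    rw [e1]
    exact ((((hf' t).hasDerivAt.const_mul A).add ((hg' t).hasDerivAt.const_mul B)).add
      (hh' t).hasDerivAt).deriv

lemma exists_bvp (κ lam T y : ℝ) (hκ : 0 ≤ κ) (hlam : 0 < lam) (hT : 0 < T)
    (F : ℝ → ℝ) (hF : Continuous F) :
    ∃ Y : ℝ → ℝ, ContDiff ℝ 2 Y ∧ Y 0 = y ∧ Y T = 0 ∧
      ∀ t, κ * Y t - 2 * lam * deriv (deriv Y) t = F t := by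
  have h2l : (2 : ℝ) * lam ≠ 0 := by positivity
  set c := κ / (2 * lam) with hcdef
  have hc : 0 ≤ c := div_nonneg hκ (by linarith)
  set g : ℝ → ℝ := fun t => -(F t) / (2 * lam) with hgdef
  obtain ⟨Yp, h1, h2, hYpc, hh1c, hh2c, hYp0, hh10, hh20, hh2T, hYpode, h1ode, h2ode⟩ :=
    exists_parts c hc T hT g (by fun_prop)
  set B := -(y * h1 T + Yp T) / h2 T with hBdef
  obtain ⟨hYc, hYdd⟩ := deriv2_lin y B hh1c hh2c hYpc
  refine ⟨fun t => y * h1 t + B * h2 t + Yp t, hYc, ?_, ?_, ?_⟩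
  · show y * h1 0 + B * h2 0 + Yp 0 = y
    rw [hh10, hh20, hYp0]
    ring
  · show y * h1 T + B * h2 T + Yp T = 0
    rw [hBdef]; field_simp; ring
  · intro t
    rw [hYdd t, h1ode, h2ode, hYpode]
    simp only [hcdef, hgdef]
    field_simp
    ring

lemma fubini_triangle {T : ℝ} (hT : 0 < T) {e ψ : ℝ → ℝ}
    (he : Measurable e) (heint : IntegrableOn e (Ioc 0 T)) (hψ : Continuous ψ) :
    ∫ t in (0:ℝ)..T, (∫ s in (0:ℝ)..t, e s) * ψ t
      = ∫ s in (0:ℝ)..T, e s * (∫ t in s..T, ψ t) := by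
  obtain ⟨C, hC⟩ := (isCompact_Icc : IsCompact (Icc (0:ℝ) T)).exists_bound_of_continuousOn
    hψ.continuousOn
  set μ := volume.restrict (Ioc (0:ℝ) T) with hμdef
  have hμfin : IsFiniteMeasure μ := by
    constructor
    rw [hμdef, Measure.restrict_apply_univ]
    exact measure_Ioc_lt_top
  set Φ : ℝ × ℝ → ℝ := fun p => {q : ℝ × ℝ | q.2 ≤ q.1}.indicator (fun q => e q.2 * ψ q.1) p
    with hΦdef
  have hΦmeas : Measurable Φ := by
    apply Measurable.indicator
    · exact (he.comp measurable_snd).mul (hψ.measurable.comp measurable_fst)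
    · exact measurableSet_le measurable_snd measurable_fst
  -- integrability of (fun p => e p.2)
  have hesnd : Integrable (fun p : ℝ × ℝ => e p.2) (μ.prod μ) := by
    have hmap : (μ.prod μ).map Prod.snd = (μ Set.univ) • μ := Measure.map_snd_prod
    have h1 : Integrable e ((μ.prod μ).map Prod.snd) := by
      rw [hmap]
      refine (integrable_smul_measure ?_ ?_).2 ?_
      · rw [hμdef, Measure.restrict_apply_univ, Real.volume_Ioc]
        simp only [ne_eq, ENNReal.ofReal_eq_zero, not_le]
        linarith
      · rw [hμdef, Measure.restrict_apply_univ]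
        exact (measure_Ioc_lt_top).ne
      · exact heint
    exact (integrable_map_measure he.stronglyMeasurable.aestronglyMeasurable
      measurable_snd.aemeasurable).1 h1
  have hΦint : Integrable Φ (μ.prod μ) := by
    refine Integrable.mono' ((hesnd.norm).const_mul C) hΦmeas.aestronglyMeasurable ?_
    have hprod : μ.prod μ = (volume.prod volume).restrict ((Ioc (0:ℝ) T) ×ˢ (Ioc (0:ℝ) T)) := by
      rw [hμdef, Measure.prod_restrict]
    rw [hprod]
    filter_upwards [ae_restrict_mem (measurableSet_Ioc.prod measurableSet_Ioc)] with p hp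
    have h1 : ‖Φ p‖ ≤ ‖e p.2 * ψ p.1‖ := norm_indicator_le_norm_self _ p
    have h2 : |ψ p.1| ≤ C := hC p.1 (Ioc_subset_Icc_self hp.1)
    calc ‖Φ p‖ ≤ ‖e p.2 * ψ p.1‖ := h1
      _ = |e p.2| * |ψ p.1| := by rw [Real.norm_eq_abs, abs_mul]
      _ ≤ |e p.2| * C := by gcongr
      _ = C * ‖e p.2‖ := by rw [Real.norm_eq_abs]; ring
  have hswap : ∫ t, (∫ s, Φ (t, s) ∂μ) ∂μ = ∫ s, (∫ t, Φ (t, s) ∂μ) ∂μ :=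
    integral_integral_swap hΦint
  -- identify LHS
  have hLHS : ∫ t in (0:ℝ)..T, (∫ s in (0:ℝ)..t, e s) * ψ t
      = ∫ t, (∫ s, Φ (t, s) ∂μ) ∂μ := by
    rw [integral_of_le hT.le]
    refine setIntegral_congr_fun measurableSet_Ioc fun t ht => ?_
    have h1 : ∀ s : ℝ, Φ (t, s) = (Iic t).indicator e s * ψ t := by
      intro s
      by_cases h : s ≤ t <;> simp [hΦdef, Set.indicator, h]
    simp only [h1]
    rw [MeasureTheory.integral_mul_const]
    congr 1
    rw [hμdef, setIntegral_indicator measurableSet_Iic,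
      Ioc_inter_Iic, min_eq_right ht.2, integral_of_le ht.1.le]
  -- identify RHS
  have hRHS : ∫ s in (0:ℝ)..T, e s * (∫ t in s..T, ψ t)
      = ∫ s, (∫ t, Φ (t, s) ∂μ) ∂μ := by
    rw [integral_of_le hT.le]
    refine setIntegral_congr_fun measurableSet_Ioc fun s hs => ?_
    have h1 : ∀ t : ℝ, Φ (t, s) = (Ici s).indicator ψ t * e s := by
      intro t
      by_cases h : s ≤ t <;> simp [hΦdef, Set.indicator, h, mul_comm]
    simp only [h1]
    rw [MeasureTheory.integral_mul_const]
    rw [mul_comm]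
    congr 1
    rw [hμdef, setIntegral_indicator measurableSet_Ici]
    have h2 : Ioc (0:ℝ) T ∩ Ici s = Icc s T := by
      ext x
      simp only [mem_inter_iff, mem_Ioc, mem_Ici, mem_Icc]
      constructor
      · rintro ⟨⟨_, hx2⟩, hx3⟩; exact ⟨hx3, hx2⟩
      · rintro ⟨hx1, hx2⟩; exact ⟨⟨lt_of_lt_of_le hs.1 hx1, hx2⟩, hx1⟩
    rw [h2, integral_Icc_eq_integral_Ioc, integral_of_le hs.2]
  rw [hLHS, hRHS, hswap]

lemma sq_int {T : ℝ} (hT : 0 ≤ T) {E : ℝ → ℝ} (hE : Measurable E)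
    (h2 : IntervalIntegrable (fun t => E t ^ 2) volume 0 T) :
    IntervalIntegrable E volume 0 T := by
  have hconst : IntegrableOn (fun _ : ℝ => (1:ℝ)) (Ioc 0 T) volume :=
    integrableOn_const measure_Ioc_lt_top.ne
  rw [intervalIntegrable_iff_integrableOn_Ioc_of_le hT] at h2 ⊢
  refine (h2.add hconst).mono' hE.aestronglyMeasurable ?_
  filter_upwards with t
  simp only [Real.norm_eq_abs, Pi.add_apply]
  nlinarith [sq_nonneg (|E t| - 1), sq_abs (E t)]

lemma key_ineq (T lam gam sig αi y : ℝ) (hT : 0 < T) (hlam : 0 < lam)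
    (hκ : 0 ≤ αi * sig ^ 2)
    (b S : ℝ → ℝ) (hb : Continuous b) (hS : ContDiff ℝ 1 S)
    (Y : ℝ → ℝ) (hY : ContDiff ℝ 2 Y) (hY0 : Y 0 = y) (hYT : Y T = 0)
    (hode : ∀ t ∈ Icc (0:ℝ) T,
      αi * sig ^ 2 * Y t - 2 * lam * deriv (deriv Y) t
        = b t + gam * S t + lam * deriv S t)
    (Z E : ℝ → ℝ) (hZE : Admissible T y Z E) :
    objective T lam gam sig αi b S Z E ≤ objective T lam gam sig αi b S Y (deriv Y) ∧
      (objective T lam gam sig αi b S Z E = objective T lam gam sig αi b S Y (deriv Y) →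
        EqOn Z Y (Icc 0 T)) := by
  obtain ⟨hEm, hE2, hZrep, hZT⟩ := hZE
  set κ := αi * sig ^ 2 with hkdef
  -- continuity facts
  have hYdiff : Differentiable ℝ Y := hY.differentiable two_ne_zero
  have hY2 : ContDiff ℝ 1 (deriv Y) := by
    rw [show (2 : WithTop ℕ∞) = 1 + 1 from rfl] at hY
    exact (contDiff_succ_iff_deriv.mp hY).2.2
  have hYd : Continuous (deriv Y) := hY2.continuous
  have hYddiff : Differentiable ℝ (deriv Y) := hY2.differentiable one_ne_zero
  have hYdd : Continuous (deriv (deriv Y)) := (contDiff_one_iff_deriv.mp hY2).2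
  have hSc : Continuous S := hS.continuous
  have hSdiff : Differentiable ℝ S := hS.differentiable one_ne_zero
  have hSd : Continuous (deriv S) := (contDiff_one_iff_deriv.mp hS).2
  -- integrability of E and e
  have hEi : IntervalIntegrable E volume 0 T := sq_int hT.le hEm hE2
  set e : ℝ → ℝ := fun s => E s - deriv Y s with hedef
  have hem : Measurable e := hEm.sub hYd.measurable
  have hei : IntervalIntegrable e volume 0 T := hEi.sub (hYd.intervalIntegrable 0 T)
  have hEY : IntervalIntegrable (fun t => E t * deriv Y t) volume 0 T :=
    hEi.mul_continuousOn hYd.continuousOn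
  have he2i : IntervalIntegrable (fun t => e t ^ 2) volume 0 T := by
    have : (fun t => e t ^ 2)
        = fun t => E t ^ 2 - 2 * (E t * deriv Y t) + deriv Y t ^ 2 := by
      funext t; simp only [hedef]; ring
    rw [this]
    exact (hE2.sub (hEY.const_mul 2)).add ((hYd.pow 2).intervalIntegrable 0 T)
  -- h = primitive of e
  set h : ℝ → ℝ := fun t => ∫ s in (0:ℝ)..t, e s with hhdef
  have hFTCy : ∀ t ∈ Icc (0:ℝ) T, (∫ s in (0:ℝ)..t, deriv Y s) = Y t - y := by
    intro t ht
    rw [integral_eq_sub_of_hasDerivAt (fun u _ => (hYdiff u).hasDerivAt)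
      (hYd.intervalIntegrable 0 t), hY0]
  have hZeq : ∀ t ∈ Icc (0:ℝ) T, Z t = Y t + h t := by
    intro t ht
    have h1 : h t = (∫ s in (0:ℝ)..t, E s) - ∫ s in (0:ℝ)..t, deriv Y s := by
      rw [hhdef]
      refine integral_sub (hEi.mono_set (uIcc_subset_uIcc left_mem_uIcc ?_))
        ((hYd.intervalIntegrable 0 t))
      rw [uIcc_of_le hT.le]
      exact ht
    rw [hZrep t ht, h1, hFTCy t ht]
    ring
  have hhcont : ContinuousOn h (Icc 0 T) := by
    have hint : IntegrableOn e (uIcc 0 T) volume := by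
      rw [uIcc_of_le hT.le, ← intervalIntegrable_iff_integrableOn_Icc_of_le hT.le]
      exact hei
    have := continuousOn_primitive_interval hint
    rwa [uIcc_of_le hT.le] at this
  set ψ : ℝ → ℝ := fun t => b t + gam * S t - κ * Y t with hψdef
  have hψc : Continuous ψ := by fun_prop
  set Φ : ℝ → ℝ := fun t => lam * S t + 2 * lam * deriv Y t with hΦdef
  have hΦc : Continuous Φ := by fun_prop
  have hΦd : ∀ u : ℝ, HasDerivAt Φ (lam * deriv S u + 2 * lam * deriv (deriv Y) u) u :=
    fun u => (((hSdiff u).hasDerivAt.const_mul lam).add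
      (((hYddiff u).hasDerivAt.const_mul (2 * lam))))
  have hΦdc : Continuous fun u => lam * deriv S u + 2 * lam * deriv (deriv Y) u := by fun_prop
  set A : ℝ → ℝ := fun t => Y t * (b t + gam * S t) - κ / 2 * Y t ^ 2
      - lam * deriv Y t * (S t + deriv Y t) with hAdef
  set P : ℝ → ℝ := fun t => h t * ψ t - κ / 2 * h t ^ 2 with hPdef
  set Q : ℝ → ℝ := fun t => -(e t * Φ t) - lam * e t ^ 2 with hQdef
  have hAc : Continuous A := by fun_prop
  have hAint : IntervalIntegrable A volume 0 T := hAc.intervalIntegrable 0 T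
  have hhψ : IntervalIntegrable (fun t => h t * ψ t) volume 0 T := by
    apply ContinuousOn.intervalIntegrable
    rw [uIcc_of_le hT.le]
    exact hhcont.mul hψc.continuousOn
  have hh2 : IntervalIntegrable (fun t => h t ^ 2) volume 0 T := by
    apply ContinuousOn.intervalIntegrable
    rw [uIcc_of_le hT.le]
    exact hhcont.pow 2
  have hPint : IntervalIntegrable P volume 0 T := hhψ.sub (hh2.const_mul (κ / 2))
  have heΦ : IntervalIntegrable (fun t => e t * Φ t) volume 0 T :=
    hei.mul_continuousOn hΦc.continuousOn
  have hnegeΦ : IntervalIntegrable (fun t => -(e t * Φ t)) volume 0 T := by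
    exact heΦ.neg
  have hQint : IntervalIntegrable Q volume 0 T := hnegeΦ.sub (he2i.const_mul lam)
  have hobjZ : objective T lam gam sig αi b S Z E = ∫ t in (0:ℝ)..T, (A t + P t + Q t) := by
    simp only [objective]
    apply integral_congr
    intro t ht
    rw [uIcc_of_le hT.le] at ht
    have h1 := hZeq t ht
    have h2 : E t = deriv Y t + e t := by simp [hedef]
    simp only [h1, h2, hAdef, hPdef, hQdef, hψdef, hΦdef, hkdef]
    ring
  have hsplit : (∫ t in (0:ℝ)..T, (A t + P t + Q t))
      = (∫ t in (0:ℝ)..T, A t) + (∫ t in (0:ℝ)..T, P t) + ∫ t in (0:ℝ)..T, Q t := by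
    rw [integral_add (hAint.add hPint) hQint, integral_add hAint hPint]
  have hPval : (∫ t in (0:ℝ)..T, P t)
      = (∫ t in (0:ℝ)..T, h t * ψ t) - κ / 2 * ∫ t in (0:ℝ)..T, h t ^ 2 := by
    rw [hPdef]
    rw [integral_sub hhψ (hh2.const_mul (κ / 2)), intervalIntegral.integral_const_mul]
  have hQval : (∫ t in (0:ℝ)..T, Q t)
      = -(∫ t in (0:ℝ)..T, e t * Φ t) - lam * ∫ t in (0:ℝ)..T, e t ^ 2 := by
    rw [hQdef]
    rw [integral_sub hnegeΦ (he2i.const_mul lam), intervalIntegral.integral_neg, intervalIntegral.integral_const_mul]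
  have hhT : (∫ s in (0:ℝ)..T, e s) = 0 := by
    have h1 := hZeq T (right_mem_Icc.2 hT.le)
    rw [hZT, hYT] at h1
    have h2 : h T = 0 := by linarith
    simpa [hhdef] using h2
  have hIBP : (∫ t in (0:ℝ)..T, h t * ψ t) = ∫ t in (0:ℝ)..T, e t * Φ t := by
    have hfub := fubini_triangle hT hem
      ((intervalIntegrable_iff_integrableOn_Ioc_of_le hT.le).1 hei) hψc
    have step1 : (∫ t in (0:ℝ)..T, h t * ψ t)
        = ∫ s in (0:ℝ)..T, e s * ∫ t in s..T, ψ t := hfub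
    rw [step1]
    have step2 : (∫ s in (0:ℝ)..T, e s * ∫ t in s..T, ψ t)
        = ∫ s in (0:ℝ)..T, (e s * Φ s - e s * Φ T) := by
      apply integral_congr
      intro s hs
      rw [uIcc_of_le hT.le] at hs
      show e s * (∫ t in s..T, ψ t) = e s * Φ s - e s * Φ T
      have hΨ : (∫ t in s..T, ψ t) = Φ s - Φ T := by
        have hcongr : (∫ t in s..T, ψ t)
            = ∫ t in s..T, -(lam * deriv S t + 2 * lam * deriv (deriv Y) t) := by
          apply integral_congr
          intro u hu
          rw [uIcc_of_le hs.2] at hu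
          show ψ u = -(lam * deriv S u + 2 * lam * deriv (deriv Y) u)
          have hu' : u ∈ Icc (0:ℝ) T := ⟨le_trans hs.1 hu.1, hu.2⟩
          have hod := hode u hu'
          simp only [hψdef]
          linarith
        rw [hcongr, intervalIntegral.integral_neg,
          integral_eq_sub_of_hasDerivAt (fun u _ => hΦd u) (hΦdc.intervalIntegrable s T)]
        ring
      rw [hΨ]; ring
    rw [step2, integral_sub heΦ (hei.mul_const _), intervalIntegral.integral_mul_const, hhT]
    ring
  have hobjY : objective T lam gam sig αi b S Y (deriv Y) = ∫ t in (0:ℝ)..T, A t := by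
    simp only [objective, hAdef, hkdef]
  have hmain : objective T lam gam sig αi b S Z E
      = objective T lam gam sig αi b S Y (deriv Y)
        - κ / 2 * (∫ t in (0:ℝ)..T, h t ^ 2) - lam * ∫ t in (0:ℝ)..T, e t ^ 2 := by
    rw [hobjZ, hsplit, hPval, hQval, hIBP, hobjY]
    ring
  have hh2nn : 0 ≤ ∫ t in (0:ℝ)..T, h t ^ 2 :=
    integral_nonneg hT.le (fun u _ => sq_nonneg _)
  have he2nn : 0 ≤ ∫ t in (0:ℝ)..T, e t ^ 2 :=
    integral_nonneg hT.le (fun u _ => sq_nonneg _)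
  have hterm1 : 0 ≤ κ / 2 * ∫ t in (0:ℝ)..T, h t ^ 2 :=
    mul_nonneg (by linarith) hh2nn
  have hterm2 : 0 ≤ lam * ∫ t in (0:ℝ)..T, e t ^ 2 := mul_nonneg hlam.le he2nn
  constructor
  · rw [hmain]; linarith
  · intro heq
    rw [hmain] at heq
    have hIe2 : (∫ t in (0:ℝ)..T, e t ^ 2) = 0 := by
      have h1 : lam * (∫ t in (0:ℝ)..T, e t ^ 2) = 0 := by linarith
      have := mul_eq_zero.1 h1
      rcases this with h | h
      · exact absurd h hlam.ne'
      · exact h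
    have he2on : IntegrableOn (fun t => e t ^ 2) (Ioc 0 T) volume :=
      (intervalIntegrable_iff_integrableOn_Ioc_of_le hT.le).1 he2i
    have hae : (fun t => e t ^ 2) =ᵐ[volume.restrict (Ioc (0:ℝ) T)] 0 := by
      have hz : (∫ t in Ioc (0:ℝ) T, e t ^ 2) = 0 := by
        rw [← integral_of_le hT.le]; exact hIe2
      exact (integral_eq_zero_iff_of_nonneg
        (fun t => sq_nonneg _) he2on).1 hz
    have haee : e =ᵐ[volume.restrict (Ioc (0:ℝ) T)] 0 := by
      filter_upwards [hae] with t ht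
      have : e t ^ 2 = 0 := ht
      have h0 : e t = 0 := by
        exact pow_eq_zero_iff (n := 2) (by norm_num) |>.1 this
      simpa using h0
    intro t ht
    have hht : h t = 0 := by
      have hsub : Ioc (0:ℝ) t ⊆ Ioc 0 T := Ioc_subset_Ioc_right ht.2
      have hres : e =ᵐ[volume.restrict (Ioc (0:ℝ) t)] 0 :=
        ae_restrict_of_ae_restrict_of_subset hsub haee
      have : (∫ s in (0:ℝ)..t, e s) = 0 := by
        rw [integral_of_le ht.1, integral_congr_ae hres]
        simp
      simpa [hhdef] using this
    rw [hZeq t ht, hht, add_zero]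

/-- given C² strategies of the competitors, player `i`'s
objective functional has a unique maximizer over `𝒳(y,T)`; moreover the
maximizer is C² and is the unique C² solution of the associated two-point
boundary value problem. -/
theorem stmt_2 (T : ℝ) (hT : 0 < T) (n : ℕ) (lam gam sig αi : ℝ)
    (hlam : 0 < lam) (hgam : 0 ≤ gam) (hsig : 0 ≤ sig) (hαi : 0 ≤ αi)
    (b : ℝ → ℝ) (hb : ContinuousOn b (Icc 0 T))
    (y : ℝ) (i : Fin n) (X : Fin n → ℝ → ℝ) (hX : ∀ j, ContDiff ℝ 2 (X j)) :
    ∃ Y : ℝ → ℝ,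
      IsMaximizer T lam gam sig αi b
        (fun t => ∑ j ∈ Finset.univ.erase i, deriv (X j) t) y Y (deriv Y) ∧
      (∀ Z E : ℝ → ℝ,
        IsMaximizer T lam gam sig αi b
          (fun t => ∑ j ∈ Finset.univ.erase i, deriv (X j) t) y Z E →
        EqOn Z Y (Icc 0 T)) ∧
      ContDiff ℝ 2 Y ∧
      (∀ t ∈ Icc (0 : ℝ) T,
        αi * sig ^ 2 * Y t - 2 * lam * deriv (deriv Y) t
          = b t + gam * ∑ j ∈ Finset.univ.erase i, deriv (X j) t
            + lam * ∑ j ∈ Finset.univ.erase i, deriv (deriv (X j)) t) ∧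
      Y 0 = y ∧ Y T = 0 ∧
      (∀ Z : ℝ → ℝ, ContDiff ℝ 2 Z →
        (∀ t ∈ Icc (0 : ℝ) T,
          αi * sig ^ 2 * Z t - 2 * lam * deriv (deriv Z) t
            = b t + gam * ∑ j ∈ Finset.univ.erase i, deriv (X j) t
              + lam * ∑ j ∈ Finset.univ.erase i, deriv (deriv (X j)) t) →
        Z 0 = y → Z T = 0 → EqOn Z Y (Icc 0 T)) := by
  classical
  set S : ℝ → ℝ := fun t => ∑ j ∈ Finset.univ.erase i, deriv (X j) t with hSdef
  have hXd : ∀ j, ContDiff ℝ 1 (deriv (X j)) := by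
    intro j
    have h2 := hX j
    rw [show (2 : WithTop ℕ∞) = 1 + 1 from rfl] at h2
    exact (contDiff_succ_iff_deriv.mp h2).2.2
  have hS : ContDiff ℝ 1 S := ContDiff.sum fun j _ => hXd j
  have hSdc : Continuous (deriv S) := (contDiff_one_iff_deriv.mp hS).2
  have hSd : ∀ t, deriv S t = ∑ j ∈ Finset.univ.erase i, deriv (deriv (X j)) t := by
    intro t
    exact deriv_fun_sum fun j _ => ((hXd j).differentiable one_ne_zero).differentiableAt
  set bt : ℝ → ℝ := Set.IccExtend hT.le ((Icc (0:ℝ) T).restrict b) with hbtdef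
  have hbtc : Continuous bt := hb.restrict.Icc_extend'
  have hbteq : ∀ t ∈ Icc (0:ℝ) T, bt t = b t := fun t ht => by
    rw [hbtdef, Set.IccExtend_of_mem hT.le _ ht]
    rfl
  have hκ : 0 ≤ αi * sig ^ 2 := by positivity
  set F : ℝ → ℝ := fun t => bt t + gam * S t + lam * deriv S t with hFdef
  have hFc : Continuous F := by
    apply Continuous.add
    apply Continuous.add hbtc
    · exact continuous_const.mul hS.continuous
    · exact continuous_const.mul hSdc
  obtain ⟨Y, hYc2, hY0, hYT, hYode⟩ := exists_bvp (αi * sig ^ 2) lam T y hκ hlam hT F hFc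
  have hode_bt : ∀ t ∈ Icc (0:ℝ) T,
      αi * sig ^ 2 * Y t - 2 * lam * deriv (deriv Y) t
        = bt t + gam * S t + lam * deriv S t := fun t _ => hYode t
  have hobj : ∀ Z E : ℝ → ℝ, objective T lam gam sig αi b S Z E
      = objective T lam gam sig αi bt S Z E := by
    intro Z E
    simp only [objective]
    apply integral_congr
    intro t ht
    rw [uIcc_of_le hT.le] at ht
    show Z t * (b t + gam * S t) - αi * sig ^ 2 / 2 * Z t ^ 2 - lam * E t * (S t + E t)
      = Z t * (bt t + gam * S t) - αi * sig ^ 2 / 2 * Z t ^ 2 - lam * E t * (S t + E t)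
    rw [hbteq t ht]
  have hYdiff : Differentiable ℝ Y := hYc2.differentiable two_ne_zero
  have hY2' : ContDiff ℝ 1 (deriv Y) := by
    have h2 := hYc2
    rw [show (2 : WithTop ℕ∞) = 1 + 1 from rfl] at h2
    exact (contDiff_succ_iff_deriv.mp h2).2.2
  have hYd : Continuous (deriv Y) := hY2'.continuous
  have hadmY : Admissible T y Y (deriv Y) := by
    refine ⟨hYd.measurable, ((hYd.pow 2).intervalIntegrable 0 T), fun t ht => ?_, hYT⟩
    rw [integral_eq_sub_of_hasDerivAt (fun u _ => (hYdiff u).hasDerivAt)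
      (hYd.intervalIntegrable 0 t), hY0]
    ring
  have hkey := fun Z E hZE => key_ineq T lam gam sig αi y hT hlam hκ bt S hbtc hS
    Y hYc2 hY0 hYT hode_bt Z E hZE
  refine ⟨Y, ⟨hadmY, ?_⟩, ?_, hYc2, ?_, hY0, hYT, ?_⟩
  · intro Z E hZE
    rw [hobj Z E, hobj Y (deriv Y)]
    exact (hkey Z E hZE).1
  · rintro Z E ⟨hZadm, hZmax⟩
    have h1 := hkey Z E hZadm
    have h2 := hZmax Y (deriv Y) hadmY
    rw [hobj Y (deriv Y), hobj Z E] at h2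
    exact h1.2 (le_antisymm h1.1 h2)
  · intro t ht
    have h1 := hYode t
    simp only [hFdef] at h1
    rw [hbteq t ht, hSd t] at h1
    exact h1
  · intro Z hZc2 hZode hZ0 hZT
    have hZdiff : Differentiable ℝ Z := hZc2.differentiable two_ne_zero
    have hZ1 : ContDiff ℝ 1 (deriv Z) := by
      have h2 := hZc2
      rw [show (2 : WithTop ℕ∞) = 1 + 1 from rfl] at h2
      exact (contDiff_succ_iff_deriv.mp h2).2.2
    have hZd : Continuous (deriv Z) := hZ1.continuous
    have hadmZ : Admissible T y Z (deriv Z) := by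
      refine ⟨hZd.measurable, ((hZd.pow 2).intervalIntegrable 0 T), fun t ht => ?_, hZT⟩
      rw [integral_eq_sub_of_hasDerivAt (fun u _ => (hZdiff u).hasDerivAt)
        (hZd.intervalIntegrable 0 t), hZ0]
      ring
    have hodeZ : ∀ t ∈ Icc (0:ℝ) T,
        αi * sig ^ 2 * Z t - 2 * lam * deriv (deriv Z) t
          = bt t + gam * S t + lam * deriv S t := by
      intro t ht
      have h1 := hZode t ht
      rw [hbteq t ht, hSd t]
      exact h1
    have h1 := key_ineq T lam gam sig αi y hT hlam hκ bt S hbtc hS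
      Y hYc2 hY0 hYT hode_bt Z (deriv Z) hadmZ
    have h2 := key_ineq T lam gam sig αi y hT hlam hκ bt S hbtc hS
      Z hZc2 hZ0 hZT hodeZ Y (deriv Y) hadmY
    exact h1.2 (le_antisymm h1.1 h2.1)
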